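/- arXiv:2404.19457 — 4 statements merged into one kernel-verified Lean document; each statement's English description precedes it below -/
import Mathlib

section
/- Let X be a real Banach space and D ⊆ X a dense subset. Then the following are equivalent: (1) X has the Daugavet property; (2) for every ε > 0 and all x, z ∈ D, either ‖z‖ ≥ ‖x‖ or z belongs to cl co_ℚ({ y ∈ D : ‖y‖ < ‖x‖ and ‖x − y‖ > 2‖x‖ − ε }). -/
/-!
Both conditions say that the points far from `x` meet every slice. By Hahn–Banach, the closed ball
of radius `‖x‖` lies in the closed convex hull of a set `A` as soon as `A` meets every half-space
`{f > c}` with `c < ‖f‖ ‖x‖`; for `A = {y : ‖y‖ ≤ ‖x‖, ‖x - y‖ > 2‖x‖ - ε}` this is the Daugavet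
property rescaled, and density moves the points of `A` into `D`, strictly inside the ball.
Conversely, for a slice and `x` on the sphere pick `x' ∈ D` near `x` just inside the ball and
`z ∈ D` in the slice with `‖z‖ < ‖x'‖`: every convex combination close to `z` has a summand in the
slice, and that summand is far from `x'`, hence from `x`. Rational coefficients change nothing,
because the closure of the rational convex combinations of a set is already convex.
-/

open scoped BigOperators Topology

/-- The set of all rational convex combinations of elements of `A`, closed in norm. -/
def clCoQ {X : Type*} [NormedAddCommGroup X] [NormedSpace ℝ X] (A : Set X) : Set X :=
  closure {z : X | ∃ (n : ℕ) (q : Fin n → ℚ) (y : Fin n → X),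
    (∀ i, 0 < q i) ∧ (∑ i, q i = 1) ∧ (∀ i, y i ∈ A) ∧ z = ∑ i, (q i : ℝ) • y i}

/-- A slice of the closed unit ball of `X`. -/
def IsSlice {X : Type*} [NormedAddCommGroup X] [NormedSpace ℝ X] (S : Set X) : Prop :=
  ∃ (f : X →L[ℝ] ℝ) (α : ℝ), ‖f‖ = 1 ∧ 0 < α ∧
    S = {x : X | ‖x‖ ≤ 1 ∧ 1 - α < f x}

/-- The local diameter `δ` property. -/
def HasLDP (X : Type*) [NormedAddCommGroup X] [NormedSpace ℝ X] (δ : ℝ) : Prop :=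
  ∀ S : Set X, IsSlice S → δ ≤ Metric.diam S

/-- The weak topology of a normed space. -/
def weakTop (X : Type*) [NormedAddCommGroup X] [NormedSpace ℝ X] : TopologicalSpace X :=
  ⨅ f : X →L[ℝ] ℝ, TopologicalSpace.induced (⇑f) inferInstance

/-- The diameter two property. -/
def HasD2P (X : Type*) [NormedAddCommGroup X] [NormedSpace ℝ X] : Prop :=
  ∀ W : Set X, IsOpen[weakTop X] W → (W ∩ {x : X | ‖x‖ ≤ 1}).Nonempty →
    Metric.diam (W ∩ {x : X | ‖x‖ ≤ 1}) = 2

/-- The diametral diameter two property. -/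
def HasDD2P (X : Type*) [NormedAddCommGroup X] [NormedSpace ℝ X] : Prop :=
  ∀ ε > (0 : ℝ), ∀ W : Set X, IsOpen[weakTop X] W →
    ∀ x ∈ W ∩ {x : X | ‖x‖ ≤ 1}, ‖x‖ = 1 →
      ∃ y ∈ W ∩ {x : X | ‖x‖ ≤ 1}, 2 - ε < ‖x - y‖

/-- A convex combination of the sets `S i` with coefficients `lam i`. -/
def combSet {X : Type*} [NormedAddCommGroup X] [NormedSpace ℝ X]
    (n : ℕ) (lam : Fin n → ℝ) (S : Fin n → Set X) : Set X :=
  {z : X | ∃ y : Fin n → X, (∀ i, y i ∈ S i) ∧ z = ∑ i, lam i • y i}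

/-- The strong diameter two property. -/
def HasSD2P (X : Type*) [NormedAddCommGroup X] [NormedSpace ℝ X] : Prop :=
  ∀ (n : ℕ) (lam : Fin n → ℝ) (S : Fin n → Set X),
    (∀ i, 0 < lam i) → (∑ i, lam i = 1) → (∀ i, IsSlice (S i)) →
    Metric.diam (combSet n lam S) = 2

/-- The diametral local diameter two property. -/
def HasDLD2P (X : Type*) [NormedAddCommGroup X] [NormedSpace ℝ X] : Prop :=
  ∀ ε > (0 : ℝ), ∀ S : Set X, IsSlice S → ∀ x ∈ S, ‖x‖ = 1 →
    ∃ y ∈ S, 2 - ε < ‖x - y‖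

/-- The Daugavet property. -/
def HasDaugavet (X : Type*) [NormedAddCommGroup X] [NormedSpace ℝ X] : Prop :=
  ∀ ε > (0 : ℝ), ∀ x : X, ‖x‖ = 1 → ∀ S : Set X, IsSlice S →
    ∃ y ∈ S, 2 - ε < ‖x - y‖

/-- Locally octahedral norm. -/
def IsLOH (X : Type*) [NormedAddCommGroup X] [NormedSpace ℝ X] : Prop :=
  ∀ ε > (0 : ℝ), ∀ x : X, ∃ y : X, ‖y‖ = 1 ∧
    ∀ t : ℝ, (1 - ε) * (|t| * ‖x‖ + ‖y‖) ≤ ‖t • x + y‖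

/-- Octahedral norm. -/
def IsOH (X : Type*) [NormedAddCommGroup X] [NormedSpace ℝ X] : Prop :=
  ∀ E : Submodule ℝ X, FiniteDimensional ℝ E → ∀ ε > (0 : ℝ),
    ∃ y : X, ‖y‖ = 1 ∧ ∀ x ∈ E, (1 - ε) * (‖x‖ + ‖y‖) ≤ ‖x + y‖

/-- Weakly octahedral norm. -/
def IsWOH (X : Type*) [NormedAddCommGroup X] [NormedSpace ℝ X] : Prop :=
  ∀ E : Submodule ℝ X, FiniteDimensional ℝ E → ∀ f : X →L[ℝ] ℝ, ‖f‖ ≤ 1 →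
    ∀ ε > (0 : ℝ), ∃ y : X, ‖y‖ = 1 ∧
      ∀ x ∈ E, (1 - ε) * (|f x| + ‖y‖) ≤ ‖x + y‖

/-- The closed unit ball of `X` is dentable: it has slices of arbitrarily small diameter. -/
def BallDentable (X : Type*) [NormedAddCommGroup X] [NormedSpace ℝ X] : Prop :=
  ∀ ε > (0 : ℝ), ∃ S : Set X, IsSlice S ∧ Metric.diam S < ε

/-- A seminorm on the space `V = ℕ →₀ ℚ` of finitely supported rational sequences. -/
def IsSeminormV (μ : (ℕ →₀ ℚ) → ℝ) : Prop :=
  (∀ (q : ℚ) (v : ℕ →₀ ℚ), μ (q • v) = |(q : ℝ)| * μ v) ∧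
    ∀ u v : ℕ →₀ ℚ, μ (u + v) ≤ μ u + μ v

/-- A seminorm on the space `c00 = ℕ →₀ ℝ` of finitely supported real sequences. -/
def IsSeminormC00 (ν : (ℕ →₀ ℝ) → ℝ) : Prop :=
  (∀ (c : ℝ) (x : ℕ →₀ ℝ), ν (c • x) = |c| * ν x) ∧
    ∀ x y : ℕ →₀ ℝ, ν (x + y) ≤ ν x + ν y

/-- The canonical inclusion of `V` into `c00`. -/
noncomputable def toC00 : (ℕ →₀ ℚ) → (ℕ →₀ ℝ) :=
  Finsupp.mapRange (fun q : ℚ => (q : ℝ)) Rat.cast_zero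

/-- `μ` belongs to `ℬ`: it is a seminorm on `V` whose (unique) seminorm extension to `c00`
is a norm. -/
def InB (μ : (ℕ →₀ ℚ) → ℝ) : Prop :=
  IsSeminormV μ ∧ ∃ ν : (ℕ →₀ ℝ) → ℝ, IsSeminormC00 ν ∧ (∀ v, ν (toC00 v) = μ v) ∧
    ∀ x : ℕ →₀ ℝ, ν x = 0 → x = 0

/-- The Polish space `𝒫` of seminorms on `V`, with the topology of pointwise convergence. -/
abbrev PSp := {μ : (ℕ →₀ ℚ) → ℝ // IsSeminormV μ}

/-- The space `ℬ` of seminorms on `V` whose extension to `c00` is a norm. -/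
abbrev BSp := {μ : (ℕ →₀ ℚ) → ℝ // InB μ}

/-- `X` is (a representative of) the Banach space `X_μ` associated to the seminorm `μ`:
there is a `ℚ`-linear map `ι : V → X` with `‖ι v‖ = μ v` and dense range. -/
def RepOf (μ : (ℕ →₀ ℚ) → ℝ) (X : Type*) [NormedAddCommGroup X] [NormedSpace ℝ X] : Prop :=
  ∃ ι : (ℕ →₀ ℚ) → X, (∀ u v, ι (u + v) = ι u + ι v) ∧
    (∀ (q : ℚ) (v), ι (q • v) = (q : ℝ) • ι v) ∧
    (∀ v, ‖ι v‖ = μ v) ∧ DenseRange ι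


/-- Fσ set: a countable union of closed sets. -/
def IsFsigma {α : Type*} [TopologicalSpace α] (s : Set α) : Prop :=
  ∃ c : ℕ → Set α, (∀ n, IsClosed (c n)) ∧ s = ⋃ n, c n

/-- Fσδ set: a countable intersection of countable unions of closed sets. -/
def IsFsigmaDelta {α : Type*} [TopologicalSpace α] (s : Set α) : Prop :=
  ∃ c : ℕ → ℕ → Set α, (∀ n m, IsClosed (c n m)) ∧ s = ⋂ n, ⋃ m, c n m

/-- Gurariĭ space. -/
def IsGurarii (G : Type*) [NormedAddCommGroup G] [NormedSpace ℝ G] : Prop :=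
  TopologicalSpace.SeparableSpace G ∧
  ∀ (F : Type) [NormedAddCommGroup F] [NormedSpace ℝ F] [FiniteDimensional ℝ F]
    (E : Submodule ℝ F) (f : E →ₗ[ℝ] G), (∀ x : E, ‖f x‖ = ‖(x : F)‖) →
    ∀ ε > (0 : ℝ), ∃ T : F →ₗ[ℝ] G, (∀ x : E, T (x : F) = f x) ∧
      ∀ x : F, (1 + ε)⁻¹ * ‖x‖ ≤ ‖T x‖ ∧ ‖T x‖ ≤ (1 + ε) * ‖x‖

/-- The weak-* topology on the dual of a normed space. -/
def wstar (X : Type*) [NormedAddCommGroup X] [NormedSpace ℝ X] :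
    TopologicalSpace (X →L[ℝ] ℝ) :=
  TopologicalSpace.induced (fun f : X →L[ℝ] ℝ => (f : X → ℝ)) Pi.topologicalSpace

/-- The Szlenk derivative of a subset of the dual of `X`. -/
def szlenkDeriv (X : Type*) [NormedAddCommGroup X] [NormedSpace ℝ X] (ε : ℝ)
    (F : Set (X →L[ℝ] ℝ)) : Set (X →L[ℝ] ℝ) :=
  {f : X →L[ℝ] ℝ | f ∈ F ∧ ∀ U : Set (X →L[ℝ] ℝ), IsOpen[wstar X] U → f ∈ U →
    ε ≤ Metric.diam (U ∩ F)}

/-- A bundled Banach space. -/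
structure BanachSp where
  carrier : Type
  [grp : NormedAddCommGroup carrier]
  [mod : NormedSpace ℝ carrier]
  [cpl : CompleteSpace carrier]

attribute [instance] BanachSp.grp BanachSp.mod BanachSp.cpl

/-- The Banach space `X_μ` associated to the seminorm `μ` satisfies `P`
(stated via arbitrary representatives, which are unique up to linear isometry). -/
def XmuSat (μ : (ℕ →₀ ℚ) → ℝ) (P : BanachSp → Prop) : Prop :=
  ∀ X : BanachSp, RepOf μ X.carrier → P X

/-- The set of elements of `ℬ` whose associated Banach space satisfies `P`. -/
def XmuB (P : BanachSp → Prop) : Set BSp := {μ : BSp | XmuSat μ.1 P}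

/-- The set of elements of `𝒫` whose associated Banach space satisfies `P`. -/
def XmuP (P : BanachSp → Prop) : Set PSp := {μ : PSp | XmuSat μ.1 P}

theorem convex_closure_of_forall_rat {E : Type*} [AddCommGroup E] [Module ℝ E]
    [TopologicalSpace E] [ContinuousAdd E] [ContinuousSMul ℝ E] {s : Set E}
    (hs : ∀ x ∈ s, ∀ y ∈ s, ∀ q : ℚ, 0 < q → q < 1 → (q : ℝ) • x + (1 - (q : ℝ)) • y ∈ s) :
    Convex ℝ (closure s) := by
  rw [convex_iff_forall_pos]
  intro x hx y hy a b ha _ hab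
  obtain rfl : b = 1 - a := by linarith
  have hrat : ∀ q : ℚ, 0 < q → q < 1 → (q : ℝ) • x + (1 - (q : ℝ)) • y ∈ closure s :=
    fun q hq0 hq1 => map_mem_closure₂ (f := fun u v => (q : ℝ) • u + (1 - (q : ℝ)) • v)
      (by fun_prop) hx hy fun u hu v hv => hs u hu v hv q hq0 hq1
  have ha_mem : a ∈ closure (Set.Ioo 0 1 ∩ Set.range ((↑) : ℚ → ℝ)) :=
    Rat.denseRange_cast.open_subset_closure_inter isOpen_Ioo ⟨ha, by linarith⟩
  rw [← closure_closure (s := s)]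
  refine map_mem_closure (f := fun t : ℝ => t • x + (1 - t) • y) (by fun_prop) ha_mem ?_
  rintro _ ⟨⟨h0, h1⟩, q, rfl⟩
  exact hrat q (by exact_mod_cast h0) (by exact_mod_cast h1)

section NormedSpace

variable {X : Type*} [NormedAddCommGroup X] [NormedSpace ℝ X]

theorem Dense.exists_mem_norm_lt_mem_of_isOpen {D : Set X} (hD : Dense D) {r : ℝ} (hr : 0 < r)
    {y : X} (hy : ‖y‖ ≤ r) {U : Set X} (hU : IsOpen U) (hyU : y ∈ U) :
    ∃ d ∈ D, ‖d‖ < r ∧ d ∈ U := by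
  have hy_cl : y ∈ closure (Metric.ball 0 r ∩ D) := by
    refine closure_minimal (hD.open_subset_closure_inter Metric.isOpen_ball) isClosed_closure ?_
    rwa [closure_ball 0 hr.ne', mem_closedBall_zero_iff]
  obtain ⟨d, hdU, hd_ball, hdD⟩ := mem_closure_iff.1 hy_cl U hU hyU
  exact ⟨d, hdD, mem_ball_zero_iff.1 hd_ball, hdU⟩

theorem ContinuousLinearMap.exists_norm_lt_lt_apply (f : X →L[ℝ] ℝ) {r c : ℝ} (hr : 0 < r)
    (hc : c < ‖f‖ * r) :
    ∃ z : X, ‖z‖ < r ∧ c < f z := by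
  obtain ⟨u, hu, hcu⟩ := f.exists_lt_apply_of_lt_opNorm ((div_lt_iff₀ hr).2 hc)
  obtain ⟨v, hv, hcv⟩ : ∃ v : X, ‖v‖ < 1 ∧ c / r < f v := by
    rcases lt_abs.1 hcu with h | h
    · exact ⟨u, hu, h⟩
    · exact ⟨-u, by rwa [norm_neg], by rwa [map_neg]⟩
  refine ⟨r • v, ?_, ?_⟩
  · rw [norm_smul, Real.norm_of_nonneg hr.le]
    nlinarith
  · rw [map_smul, smul_eq_mul]
    rwa [div_lt_iff₀' hr] at hcv

theorem exists_lt_apply_of_mem_closure_convexHull {A : Set X} {z : X}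
    (hz : z ∈ closure (convexHull ℝ A)) (f : X →L[ℝ] ℝ) {c : ℝ} (hc : c < f z) :
    ∃ y ∈ A, c < f y := by
  by_contra! hA
  have hle : closure (convexHull ℝ A) ⊆ {w | f w ≤ c} :=
    closure_minimal (convexHull_min hA (convex_halfSpace_le f.isLinear c))
      (isClosed_le f.continuous continuous_const)
  exact (hle hz).not_gt hc

theorem closedBall_subset_closure_convexHull {A : Set X} {R : ℝ}
    (hA : ∀ (f : X →L[ℝ] ℝ) (c : ℝ), c < ‖f‖ * R → ∃ y ∈ A, c < f y) :
    Metric.closedBall 0 R ⊆ closure (convexHull ℝ A) := by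
  intro w hw
  by_contra hw'
  obtain ⟨f, c, hfA, hcw⟩ :=
    geometric_hahn_banach_closed_point (convex_convexHull ℝ A).closure isClosed_closure hw'
  have hc : c < ‖f‖ * R := hcw.trans_le <| (le_abs_self _).trans <|
    f.le_opNorm_of_le (mem_closedBall_zero_iff.1 hw)
  obtain ⟨y, hyA, hcy⟩ := hA f c hc
  exact (hfA y (subset_closure (subset_convexHull ℝ A hyA))).not_gt hcy

def ratConvexCombinations (A : Set X) : Set X :=
  {z : X | ∃ (n : ℕ) (q : Fin n → ℚ) (y : Fin n → X),
    (∀ i, 0 < q i) ∧ (∑ i, q i = 1) ∧ (∀ i, y i ∈ A) ∧ z = ∑ i, (q i : ℝ) • y i}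

theorem subset_ratConvexCombinations (A : Set X) : A ⊆ ratConvexCombinations A := fun a ha =>
  ⟨1, fun _ => 1, fun _ => a, fun _ => one_pos, by simp, fun _ => ha, by simp⟩

theorem ratConvexCombinations_subset_convexHull (A : Set X) :
    ratConvexCombinations A ⊆ convexHull ℝ A := by
  rintro _ ⟨n, q, y, hq, hq_sum, hyA, rfl⟩
  exact (convex_convexHull ℝ A).sum_mem (fun i _ => by exact_mod_cast (hq i).le)
    (by exact_mod_cast hq_sum) fun i _ => subset_convexHull ℝ A (hyA i)

theorem smul_add_one_sub_smul_mem_ratConvexCombinations {A : Set X} {u v : X}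
    (hu : u ∈ ratConvexCombinations A) (hv : v ∈ ratConvexCombinations A) {s : ℚ} (hs0 : 0 < s)
    (hs1 : s < 1) : (s : ℝ) • u + (1 - (s : ℝ)) • v ∈ ratConvexCombinations A := by
  obtain ⟨n, q, y, hq, hq_sum, hyA, rfl⟩ := hu
  obtain ⟨m, p, w, hp, hp_sum, hwA, rfl⟩ := hv
  refine ⟨n + m, Fin.append (fun i => s * q i) (fun j => (1 - s) * p j), Fin.append y w,
    fun i => ?_, ?_, fun i => ?_, ?_⟩
  · induction i using Fin.addCases with
    | left i => simpa only [Fin.append_left] using mul_pos hs0 (hq i)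
    | right j => simpa only [Fin.append_right] using mul_pos (sub_pos.2 hs1) (hp j)
  · rw [Fin.sum_univ_add]
    simp only [Fin.append_left, Fin.append_right]
    rw [← Finset.mul_sum, ← Finset.mul_sum, hq_sum, hp_sum]
    ring
  · induction i using Fin.addCases with
    | left i => simpa only [Fin.append_left] using hyA i
    | right j => simpa only [Fin.append_right] using hwA j
  · simp only [Fin.sum_univ_add, Fin.append_left, Fin.append_right, Finset.smul_sum, smul_smul]
    push_cast
    rfl

theorem clCoQ_eq_closure_convexHull (A : Set X) : clCoQ A = closure (convexHull ℝ A) := by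
  have hconvex : Convex ℝ (clCoQ A) := convex_closure_of_forall_rat fun u hu v hv q hq0 hq1 =>
    smul_add_one_sub_smul_mem_ratConvexCombinations hu hv hq0 hq1
  refine (closure_mono (ratConvexCombinations_subset_convexHull A)).antisymm ?_
  refine closure_minimal (convexHull_min ?_ hconvex) isClosed_closure
  exact (subset_ratConvexCombinations A).trans subset_closure

end NormedSpace

namespace HasDaugavet

variable {X : Type*} [NormedAddCommGroup X] [NormedSpace ℝ X]

theorem exists_far_of_norm_eq_one (h : HasDaugavet X) {u : X} (hu : ‖u‖ = 1)
    {f : X →L[ℝ] ℝ} (hf : f ≠ 0) {t : ℝ} (ht : t < ‖f‖) {ε : ℝ} (hε : 0 < ε) :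
    ∃ y : X, ‖y‖ ≤ 1 ∧ t < f y ∧ 2 - ε < ‖u - y‖ := by
  have hf_pos : 0 < ‖f‖ := norm_pos_iff.2 hf
  have hslice : IsSlice {y : X | ‖y‖ ≤ 1 ∧ 1 - (1 - t / ‖f‖) < (‖f‖⁻¹ • f) y} :=
    ⟨‖f‖⁻¹ • f, 1 - t / ‖f‖, by rw [norm_smul, norm_inv, norm_norm, inv_mul_cancel₀ hf_pos.ne'],
      by rwa [sub_pos, div_lt_one hf_pos], rfl⟩
  obtain ⟨y, ⟨hy, hty⟩, hyu⟩ := h ε hε u hu _ hslice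
  refine ⟨y, hy, ?_, hyu⟩
  rw [sub_sub_cancel, smul_apply, smul_eq_mul, ← div_eq_inv_mul] at hty
  exact (div_lt_div_iff_of_pos_right hf_pos).1 hty

theorem exists_far (h : HasDaugavet X) {x : X} (hx : x ≠ 0) (f : X →L[ℝ] ℝ) {c : ℝ}
    (hc : c < ‖f‖ * ‖x‖) {ε : ℝ} (hε : 0 < ε) :
    ∃ y : X, ‖y‖ ≤ ‖x‖ ∧ c < f y ∧ 2 * ‖x‖ - ε < ‖x - y‖ := by
  have hR : 0 < ‖x‖ := norm_pos_iff.2 hx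
  rcases eq_or_ne f 0 with rfl | hf
  · refine ⟨-x, by rw [norm_neg], by simpa using hc, ?_⟩
    rw [sub_neg_eq_add, ← two_smul ℝ x, norm_smul, Real.norm_two]
    linarith
  obtain ⟨y, hy, hfy, hyu⟩ := h.exists_far_of_norm_eq_one (u := ‖x‖⁻¹ • x)
    (by rw [norm_smul, norm_inv, norm_norm, inv_mul_cancel₀ hR.ne']) hf
    ((div_lt_iff₀ hR).2 hc) (div_pos hε hR)
  have hx_eq : x - ‖x‖ • y = ‖x‖ • (‖x‖⁻¹ • x - y) := by
    rw [smul_sub, smul_inv_smul₀ hR.ne']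
  refine ⟨‖x‖ • y, ?_, ?_, ?_⟩
  · rw [norm_smul, norm_norm]
    exact mul_le_of_le_one_right hR.le hy
  · rw [map_smul, smul_eq_mul]
    rwa [div_lt_iff₀' hR] at hfy
  · rw [hx_eq, norm_smul, norm_norm]
    calc 2 * ‖x‖ - ε = ‖x‖ * (2 - ε / ‖x‖) := by field_simp
      _ < ‖x‖ * ‖‖x‖⁻¹ • x - y‖ := mul_lt_mul_of_pos_left hyu hR

theorem mem_closure_convexHull_far (h : HasDaugavet X) {D : Set X} (hD : Dense D) {ε : ℝ}
    (hε : 0 < ε) {x z : X} (hzx : ‖z‖ < ‖x‖) :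
    z ∈ closure (convexHull ℝ {y : X | y ∈ D ∧ ‖y‖ < ‖x‖ ∧ 2 * ‖x‖ - ε < ‖x - y‖}) := by
  have hx : 0 < ‖x‖ := (norm_nonneg z).trans_lt hzx
  refine closedBall_subset_closure_convexHull (fun f c hc => ?_) (mem_closedBall_zero_iff.2 hzx.le)
  obtain ⟨y, hyx, hy⟩ := h.exists_far (norm_pos_iff.1 hx) f hc hε
  have hU : IsOpen {d : X | c < f d ∧ 2 * ‖x‖ - ε < ‖x - d‖} :=
    (isOpen_lt continuous_const f.continuous).inter
      (isOpen_lt continuous_const (continuous_const.sub continuous_id).norm)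
  obtain ⟨d, hdD, hdx, hcd, hxd⟩ := hD.exists_mem_norm_lt_mem_of_isOpen hx hyx hU hy
  exact ⟨d, ⟨hdD, hdx, hxd⟩, hcd⟩

theorem of_dense_mem_closure_convexHull_far {D : Set X} (hD : Dense D)
    (h : ∀ ε > (0 : ℝ), ∀ x ∈ D, ∀ z ∈ D, ‖z‖ < ‖x‖ →
      z ∈ closure (convexHull ℝ {y : X | y ∈ D ∧ ‖y‖ < ‖x‖ ∧ 2 * ‖x‖ - ε < ‖x - y‖})) :
    HasDaugavet X := by
  rintro ε hε x hx S ⟨f, α, hf, hα, rfl⟩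
  obtain ⟨η, hη, hηα, hηε, hη1⟩ : ∃ η : ℝ, 0 < η ∧ η ≤ α ∧ η ≤ ε / 6 ∧ η < 1 / 2 :=
    ⟨min α (min ε 1) / 6, by positivity, by linarith [min_le_left α (min ε 1)],
      by linarith [min_le_right α (min ε 1), min_le_left ε 1],
      by linarith [min_le_right α (min ε 1), min_le_right ε 1]⟩
  obtain ⟨x', hx'D, hx'1, hx'_ball⟩ :=
    hD.exists_mem_norm_lt_mem_of_isOpen one_pos hx.le Metric.isOpen_ball (Metric.mem_ball_self hη)
  have hxx' : ‖x' - x‖ < η := by rwa [Metric.mem_ball, dist_eq_norm] at hx'_ball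
  have hx' : 1 - η < ‖x'‖ := by linarith [norm_sub_norm_le x x', norm_sub_rev x x']
  obtain ⟨z₀, hz₀, hfz₀⟩ :=
    f.exists_norm_lt_lt_apply (r := ‖x'‖) (c := 1 - α) (by linarith) (by rw [hf]; linarith)
  obtain ⟨z, hzD, hzx', hfz⟩ := hD.exists_mem_norm_lt_mem_of_isOpen (by linarith) hz₀.le
    (isOpen_lt continuous_const f.continuous) hfz₀
  obtain ⟨y, ⟨-, hyx', hx'y⟩, hfy⟩ :=
    exists_lt_apply_of_mem_closure_convexHull (h (ε / 2) (by positivity) x' hx'D z hzD hzx') f hfz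
  refine ⟨y, ⟨(hyx'.trans hx'1).le, hfy⟩, ?_⟩
  -- `‖x - y‖ ≥ ‖x' - y‖ - ‖x' - x‖ > (2‖x'‖ - ε / 2) - η > 2 - 3η - ε / 2`
  linarith [norm_sub_le_norm_sub_add_norm_sub x' x y]

end HasDaugavet

theorem stmt2_general (X : Type) [NormedAddCommGroup X] [NormedSpace ℝ X]
    (D : Set X) (hD : Dense D) :
    HasDaugavet X ↔
      ∀ ε > (0 : ℝ), ∀ x ∈ D, ∀ z ∈ D, ‖x‖ ≤ ‖z‖ ∨
        z ∈ clCoQ {y : X | y ∈ D ∧ ‖y‖ < ‖x‖ ∧ 2 * ‖x‖ - ε < ‖x - y‖} := by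
  simp only [clCoQ_eq_closure_convexHull, or_iff_not_imp_left, not_le]
  exact ⟨fun h _ hε _ _ _ _ hzx => h.mem_closure_convexHull_far hD hε hzx,
    HasDaugavet.of_dense_mem_closure_convexHull_far hD⟩

theorem stmt2 (X : Type) [NormedAddCommGroup X] [NormedSpace ℝ X] [CompleteSpace X]
    (D : Set X) (hD : Dense D) :
    HasDaugavet X ↔
      ∀ ε > (0 : ℝ), ∀ x ∈ D, ∀ z ∈ D, ‖x‖ ≤ ‖z‖ ∨
        z ∈ clCoQ {y : X | y ∈ D ∧ ‖y‖ < ‖x‖ ∧ 2 * ‖x‖ - ε < ‖x - y‖} :=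
  stmt2_general X D hD
end

section
/- Let X be a real Banach space and D ⊆ X a dense subset. Then X is locally octahedral if and only if for every ε > 0 and every x ∈ D there exists y ∈ D with ‖y‖ ≠ 0 such that ‖ ‖y‖·x − ‖x‖·y ‖ > ‖y‖·(2‖x‖ − ε) and ‖ ‖y‖·x + ‖x‖·y ‖ > ‖y‖·(2‖x‖ − ε). -/
open scoped BigOperators Topology

/-!
Both sides are forms of the sphere characterisation of local octahedrality: for every
`x ∈ S_X` and `δ > 0` there is `y ∈ S_X` with `‖x ± y‖ > 2 - δ`. It follows from LOH at
`t = ±1`, and conversely implies LOH because `‖a + b‖ ≥ 2 - δ` for `a, b` in the unit ball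
forces `‖s • a + r • b‖ ≥ (1 - δ) (s + r)` for all `s, r ≥ 0` (write
`s • a + r • b = s • (a + b) - (s - r) • b` when `r ≤ s`). Since `normalize` is continuous
away from `0`, the sphere condition may be tested on the directions of a dense set, and
`‖y‖ • x ± ‖x‖ • y = (‖x‖ * ‖y‖) • (normalize x ± normalize y)` turns the right-hand side
into exactly that test.
-/

open NormedSpace

section

variable {E : Type*} [SeminormedAddCommGroup E]

def AlmostDiametral (δ : ℝ) (a b : E) : Prop :=
  2 - δ < ‖a - b‖ ∧ 2 - δ < ‖a + b‖

lemma AlmostDiametral.symm {δ : ℝ} {a b : E} (h : AlmostDiametral δ a b) :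
    AlmostDiametral δ b a := by
  rwa [AlmostDiametral, norm_sub_rev, add_comm]

lemma AlmostDiametral.of_norm_sub_lt {δ η : ℝ} {a b c : E} (h : AlmostDiametral δ b c)
    (hab : ‖b - a‖ < η) : AlmostDiametral (δ + η) a c := by
  have hm : ‖b - c‖ ≤ ‖a - c‖ + ‖b - a‖ := by
    simpa only [sub_add_sub_cancel'] using norm_add_le (a - c) (b - a)
  have hp : ‖b + c‖ ≤ ‖a + c‖ + ‖b - a‖ := by
    calc ‖b + c‖ = ‖(a + c) + (b - a)‖ := by congr 1; abel
      _ ≤ ‖a + c‖ + ‖b - a‖ := norm_add_le _ _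
  exact ⟨by linarith [h.1], by linarith [h.2]⟩

lemma one_sub_mul_add_le_norm_smul_add_smul [NormedSpace ℝ E] {a b : E} (ha : ‖a‖ ≤ 1)
    (hb : ‖b‖ ≤ 1) {δ : ℝ} (h : 2 - δ ≤ ‖a + b‖) {s r : ℝ} (hs : 0 ≤ s) (hr : 0 ≤ r) :
    (1 - δ) * (s + r) ≤ ‖s • a + r • b‖ := by
  wlog hrs : r ≤ s generalizing a b s r
  · simpa only [add_comm] using this hb ha (by rwa [add_comm]) hr hs (le_of_not_ge hrs)
  have hδ : 0 ≤ δ := by linarith [norm_add_le a b]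
  calc (1 - δ) * (s + r) ≤ s * (2 - δ) - (s - r) * 1 := by nlinarith
    _ ≤ s * ‖a + b‖ - (s - r) * ‖b‖ := by gcongr
    _ = ‖s • (a + b)‖ - ‖(s - r) • b‖ := by
      rw [norm_smul, norm_smul, Real.norm_of_nonneg hs, Real.norm_of_nonneg (sub_nonneg.2 hrs)]
    _ ≤ ‖s • (a + b) - (s - r) • b‖ := norm_sub_norm_le _ _
    _ = ‖s • a + r • b‖ := by congr 1; module

end

section

variable {E : Type*} [NormedAddCommGroup E] [NormedSpace ℝ E]

lemma Dense.exists_normalize_near {D : Set E} (hD : Dense D) {z : E} (hz : z ≠ 0) {η : ℝ}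
    (hη : 0 < η) : ∃ y ∈ D, y ≠ 0 ∧ ‖normalize y - normalize z‖ < η := by
  have hcont : ContinuousAt (normalize : E → E) z :=
    (continuous_norm.continuousAt.inv₀ (norm_ne_zero_iff.2 hz)).smul continuousAt_id
  obtain ⟨y, hyD, hy0, hyz⟩ := hD.inter_nhds_nonempty <| Filter.inter_mem
    (isOpen_ne.mem_nhds hz) (hcont.preimage_mem_nhds (Metric.ball_mem_nhds (normalize z) hη))
  exact ⟨y, hyD, hy0, by rwa [Set.mem_preimage, Metric.mem_ball, dist_eq_norm] at hyz⟩

variable (E) in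
def IsLOHOn (D : Set E) : Prop :=
  ∀ x ∈ D, x ≠ 0 → ∀ δ > 0, ∃ y ∈ D, y ≠ 0 ∧ AlmostDiametral δ (normalize x) (normalize y)

lemma isLOH_iff : IsLOH E ↔ Nontrivial E ∧ IsLOHOn E Set.univ := by
  constructor
  · intro h
    obtain ⟨u, hu, -⟩ := h 1 one_pos 0
    refine ⟨nontrivial_of_ne u 0 (norm_ne_zero_iff.1 (by simp [hu])), ?_⟩
    rintro x - hx δ hδ
    obtain ⟨y, hy, hxy⟩ := h (δ / 4) (by positivity) (normalize x)
    refine ⟨y, trivial, norm_ne_zero_iff.1 (by simp [hy]), ?_⟩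
    have h₁ := hxy 1
    have h₂ := hxy (-1)
    rw [abs_neg, neg_smul, one_smul, neg_add_eq_sub, norm_sub_rev] at h₂
    rw [one_smul] at h₁
    simp only [abs_one, one_mul, norm_normalize hx, hy] at h₁ h₂
    rw [normalize_eq_self_of_norm_eq_one hy]
    constructor <;> linarith
  · rintro ⟨hE, hoct⟩ ε hε x
    rcases eq_or_ne x 0 with rfl | hx
    · obtain ⟨u, hu⟩ := exists_ne (0 : E)
      refine ⟨normalize u, norm_normalize hu, fun t => ?_⟩
      simp only [smul_zero, zero_add, norm_zero, mul_zero, norm_normalize hu]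
      linarith
    obtain ⟨y, -, hy, hm, hp⟩ := hoct x trivial hx ε hε
    refine ⟨normalize y, norm_normalize hy, fun t => ?_⟩
    obtain ⟨a, ha, hay, hta⟩ : ∃ a : E, ‖a‖ = 1 ∧ 2 - ε < ‖a + normalize y‖ ∧
        t • x = (|t| * ‖x‖) • a := by
      rcases le_or_gt 0 t with ht | ht
      · exact ⟨normalize x, norm_normalize hx, hp,
          by rw [abs_of_nonneg ht, mul_smul, norm_smul_normalize]⟩
      · refine ⟨-normalize x, by rw [norm_neg, norm_normalize hx], ?_, ?_⟩
        · rwa [neg_add_eq_sub, norm_sub_rev]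
        · rw [abs_of_neg ht, mul_smul, smul_neg, norm_smul_normalize, neg_smul, smul_neg, neg_neg]
    rw [hta, norm_normalize hy]
    simpa only [one_smul] using one_sub_mul_add_le_norm_smul_add_smul ha.le
      (norm_normalize hy).le hay.le (by positivity) zero_le_one

lemma Dense.isLOHOn_iff {D : Set E} (hD : Dense D) : IsLOHOn E D ↔ IsLOHOn E Set.univ := by
  constructor
  · rintro h x - hx δ hδ
    obtain ⟨x', hx'D, hx', hxx'⟩ := hD.exists_normalize_near hx (half_pos hδ)
    obtain ⟨y, -, hy, hxy⟩ := h x' hx'D hx' (δ / 2) (half_pos hδ)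
    refine ⟨y, trivial, hy, ?_⟩
    simpa only [add_halves] using hxy.of_norm_sub_lt hxx'
  · intro h x hxD hx δ hδ
    obtain ⟨y, -, hy, hxy⟩ := h x trivial hx (δ / 2) (half_pos hδ)
    obtain ⟨y', hy'D, hy', hyy'⟩ := hD.exists_normalize_near hy (half_pos hδ)
    refine ⟨y', hy'D, hy', ?_⟩
    rw [norm_sub_rev] at hyy'
    simpa only [add_halves] using (hxy.symm.of_norm_sub_lt hyy').symm

lemma almostDiametral_normalize_iff {x y : E} (hx : x ≠ 0) (hy : y ≠ 0) (ε : ℝ) :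
    AlmostDiametral (ε / ‖x‖) (normalize x) (normalize y) ↔
      ‖y‖ * (2 * ‖x‖ - ε) < ‖‖y‖ • x - ‖x‖ • y‖ ∧
        ‖y‖ * (2 * ‖x‖ - ε) < ‖‖y‖ • x + ‖x‖ • y‖ := by
  have hxy : 0 < ‖x‖ * ‖y‖ := by positivity
  have hlhs : ‖y‖ * (2 * ‖x‖ - ε) = ‖x‖ * ‖y‖ * (2 - ε / ‖x‖) := by
    field_simp
  have hminus : ‖y‖ • x - ‖x‖ • y = (‖x‖ * ‖y‖) • (normalize x - normalize y) := by
    rw [NormedSpace.normalize, NormedSpace.normalize]; match_scalars <;> field_simp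
  have hplus : ‖y‖ • x + ‖x‖ • y = (‖x‖ * ‖y‖) • (normalize x + normalize y) := by
    rw [NormedSpace.normalize, NormedSpace.normalize]; match_scalars <;> field_simp
  rw [hminus, hplus, norm_smul, norm_smul, Real.norm_of_nonneg hxy.le, hlhs,
    mul_lt_mul_iff_right₀ hxy, mul_lt_mul_iff_right₀ hxy, AlmostDiametral]

end

theorem stmt4_general (X : Type) [NormedAddCommGroup X] [NormedSpace ℝ X]
    (D : Set X) (hD : Dense D) :
    IsLOH X ↔
      ∀ ε > (0 : ℝ), ∀ x ∈ D, ∃ y ∈ D, ‖y‖ ≠ 0 ∧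
        ‖y‖ * (2 * ‖x‖ - ε) < ‖‖y‖ • x - ‖x‖ • y‖ ∧
        ‖y‖ * (2 * ‖x‖ - ε) < ‖‖y‖ • x + ‖x‖ • y‖ := by
  rw [isLOH_iff, ← hD.isLOHOn_iff]
  constructor
  · rintro ⟨hX, hDoct⟩ ε hε x hxD
    rcases eq_or_ne x 0 with rfl | hx
    · obtain ⟨y, hyD, hy⟩ := hD.exists_mem_open isOpen_ne (exists_ne (0 : X))
      have hy' : 0 < ‖y‖ := norm_pos_iff.2 hy
      refine ⟨y, hyD, hy'.ne', ?_⟩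
      simp only [norm_zero, smul_zero, zero_smul, sub_zero, add_zero, mul_zero, zero_sub]
      have hneg : ‖y‖ * -ε < 0 := mul_neg_of_pos_of_neg hy' (neg_neg_of_pos hε)
      exact ⟨hneg, hneg⟩
    obtain ⟨y, hyD, hy, hxy⟩ := hDoct x hxD hx (ε / ‖x‖) (by positivity)
    exact ⟨y, hyD, norm_ne_zero_iff.2 hy, (almostDiametral_normalize_iff hx hy ε).1 hxy⟩
  · intro h
    refine ⟨?_, fun x hxD hx δ hδ => ?_⟩
    · obtain ⟨x, hxD⟩ := hD.nonempty
      obtain ⟨y, -, hy, -⟩ := h 1 one_pos x hxD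
      exact nontrivial_of_ne y 0 (norm_ne_zero_iff.1 hy)
    obtain ⟨y, hyD, hy, hxy⟩ := h (δ * ‖x‖) (by positivity) x hxD
    refine ⟨y, hyD, norm_ne_zero_iff.1 hy, ?_⟩
    rw [← mul_div_cancel_right₀ δ (norm_ne_zero_iff.2 hx)]
    exact (almostDiametral_normalize_iff hx (norm_ne_zero_iff.1 hy) _).2 hxy

theorem stmt4 (X : Type) [NormedAddCommGroup X] [NormedSpace ℝ X] [CompleteSpace X]
    (D : Set X) (hD : Dense D) :
    IsLOH X ↔
      ∀ ε > (0 : ℝ), ∀ x ∈ D, ∃ y ∈ D, ‖y‖ ≠ 0 ∧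
        ‖y‖ * (2 * ‖x‖ - ε) < ‖‖y‖ • x - ‖x‖ • y‖ ∧
        ‖y‖ * (2 * ‖x‖ - ε) < ‖‖y‖ • x + ‖x‖ • y‖ :=
  stmt4_general X D hD
end

section
/- Let X be a real Banach space and D ⊆ X a dense subset. Then X is octahedral if and only if for every ε > 0, every n ∈ ℕ and all x_1, …, x_n ∈ D there exists y ∈ D with ‖y‖ ≠ 0 such that ‖ ‖y‖·x_i + ‖x_i‖·y ‖ > ‖y‖·(2‖x_i‖ − ε) for every i ∈ {1, …, n}. -/
open scoped BigOperators Topology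

/-! Normalising `y`, the condition reads `2‖x‖ - ε < ‖x + ‖x‖ • y‖` with `‖y‖ = 1`. It is an open
condition on `y`, so a unit vector given by octahedrality (applied to the span of the `x i`) can be
moved into the dense set `D`. Conversely, for a fixed `y` of norm at most one the defect
`x ↦ ‖x + ‖x‖ • y‖ - 2‖x‖` is `4`-Lipschitz, so the condition on a finite `ε / 8`-net in `D` of the
unit sphere of a finite-dimensional `E` gives `2 - ε < ‖u + y‖` on that whole sphere, and the
triangle inequality spreads this to the octahedral inequality on all of `E`. -/

section Octahedral

variable {X : Type*} [NormedAddCommGroup X] [NormedSpace ℝ X]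

theorem norm_smul_add_norm_smul (x y : X) :
    ‖‖y‖ • x + ‖x‖ • y‖ = ‖y‖ * ‖x + ‖x‖ • ‖y‖⁻¹ • y‖ := by
  rcases eq_or_ne y 0 with rfl | hy
  · simp
  rw [← norm_smul_of_nonneg (norm_nonneg y), smul_add, smul_comm ‖y‖ ‖x‖,
    smul_inv_smul₀ (norm_ne_zero_iff.mpr hy)]

theorem norm_add_norm_smul (x y : X) : ‖x + ‖x‖ • y‖ = ‖x‖ * ‖‖x‖⁻¹ • x + y‖ := by
  rcases eq_or_ne x 0 with rfl | hx
  · simp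
  rw [← norm_smul_of_nonneg (norm_nonneg x), smul_add, smul_inv_smul₀ (norm_ne_zero_iff.mpr hx)]

theorem lipschitzWith_norm_add_norm_smul_sub {y : X} (hy : ‖y‖ ≤ 1) :
    LipschitzWith 4 fun x : X => ‖x + ‖x‖ • y‖ - 2 * ‖x‖ := by
  refine LipschitzWith.of_le_add_mul 4 fun x x' => ?_
  have hsub : ‖x + ‖x‖ • y‖ ≤ ‖x' + ‖x'‖ • y‖ + 2 * ‖x - x'‖ := by
    have hxy : x + ‖x‖ • y = (x' + ‖x'‖ • y) + ((x - x') + (‖x‖ - ‖x'‖) • y) := by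
      rw [sub_smul]; abel
    have hnorm : |‖x‖ - ‖x'‖| * ‖y‖ ≤ ‖x - x'‖ :=
      (mul_le_of_le_one_right (abs_nonneg _) hy).trans (abs_norm_sub_norm_le x x')
    calc ‖x + ‖x‖ • y‖ ≤ ‖x' + ‖x'‖ • y‖ + (‖x - x'‖ + |‖x‖ - ‖x'‖| * ‖y‖) := by
          rw [hxy, ← Real.norm_eq_abs, ← norm_smul]
          exact (norm_add_le _ _).trans (by gcongr; exact norm_add_le _ _)
      _ ≤ ‖x' + ‖x'‖ • y‖ + 2 * ‖x - x'‖ := by linarith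
  have := norm_sub_norm_le x' x
  rw [norm_sub_rev, ← dist_eq_norm] at this
  rw [← dist_eq_norm] at hsub
  push_cast
  linarith

theorem one_sub_mul_add_one_le_norm_smul_add {u y : X} (hu : ‖u‖ = 1) (hy : ‖y‖ = 1) {ε t : ℝ}
    (h : 2 - ε ≤ ‖u + y‖) (ht : 0 ≤ t) : (1 - ε) * (t + 1) ≤ ‖t • u + y‖ := by
  have hε : 0 ≤ ε := by linarith [norm_add_le u y]
  rcases le_total t 1 with ht1 | ht1
  · have : ‖u + y‖ ≤ ‖t • u + y‖ + (1 - t) := by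
      calc ‖u + y‖ = ‖(t • u + y) + (1 - t) • u‖ := by rw [sub_smul, one_smul]; abel_nf
        _ ≤ ‖t • u + y‖ + (1 - t) := by
          refine (norm_add_le _ _).trans_eq ?_
          rw [norm_smul, hu, Real.norm_of_nonneg (by linarith), mul_one]
    nlinarith
  · have : t * ‖u + y‖ ≤ ‖t • u + y‖ + (t - 1) := by
      calc t * ‖u + y‖ = ‖(t • u + y) + (t - 1) • y‖ := by
            rw [← Real.norm_of_nonneg ht, ← norm_smul, Real.norm_of_nonneg ht, sub_smul, one_smul,
              smul_add]
            abel_nf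
        _ ≤ ‖t • u + y‖ + (t - 1) := by
          refine (norm_add_le _ _).trans_eq ?_
          rw [norm_smul, hy, Real.norm_of_nonneg (by linarith), mul_one]
    nlinarith

theorem isOpen_setOf_forall_lt_norm_smul_add {ι : Type*} [Finite ι] (x : ι → X) (ε : ℝ) :
    IsOpen {y : X | ‖y‖ ≠ 0 ∧ ∀ i, ‖y‖ * (2 * ‖x i‖ - ε) < ‖‖y‖ • x i + ‖x i‖ • y‖} := by
  simp only [Set.ofPred_and, Set.ofPred_forall]
  exact (isOpen_ne_fun continuous_norm continuous_const).inter
    (isOpen_iInter_of_finite fun i => isOpen_lt (by fun_prop) (by fun_prop))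

theorem IsOH.exists_norm_eq_one_forall_lt (hX : IsOH X) {ι : Type*} [Finite ι] (x : ι → X)
    {ε : ℝ} (hε : 0 < ε) : ∃ y : X, ‖y‖ = 1 ∧ ∀ i, 2 * ‖x i‖ - ε < ‖x i + ‖x i‖ • y‖ := by
  obtain ⟨M, hM⟩ := Finite.exists_le fun i => ‖x i‖
  set δ := ε / (2 * (|M| + 1))
  have hδ : 0 < δ := by positivity
  obtain ⟨y, hy, hE⟩ := hX (Submodule.span ℝ (Set.range x))
    (FiniteDimensional.span_of_finite ℝ (Set.finite_range x)) δ hδ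
  refine ⟨y, hy, fun i => ?_⟩
  rcases eq_or_ne (x i) 0 with hxi | hxi
  · simpa [hxi] using hε
  have h := hE (‖x i‖⁻¹ • x i) (Submodule.smul_mem _ _ (Submodule.subset_span ⟨i, rfl⟩))
  have hu : ‖‖x i‖⁻¹ • x i‖ = 1 := norm_smul_inv_norm (𝕜 := ℝ) hxi
  rw [hu, hy] at h
  have hδM : δ * ‖x i‖ < ε / 2 := calc
    δ * ‖x i‖ ≤ δ * |M| := by gcongr; exact (hM i).trans (le_abs_self M)
    _ < δ * (|M| + 1) := by gcongr; linarith
    _ = ε / 2 := by simp only [δ]; field_simp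
  rw [norm_add_norm_smul]
  nlinarith [mul_le_mul_of_nonneg_left h (norm_nonneg (x i))]

theorem exists_norm_eq_one_forall_lt_of_isCompact {D : Set X} (hD : Dense D)
    (h : ∀ ε > (0 : ℝ), ∀ (n : ℕ) (x : Fin n → X), (∀ i, x i ∈ D) →
      ∃ y ∈ D, ‖y‖ ≠ 0 ∧ ∀ i, ‖y‖ * (2 * ‖x i‖ - ε) < ‖‖y‖ • x i + ‖x i‖ • y‖)
    {K : Set X} (hK : IsCompact K) {ε : ℝ} (hε : 0 < ε) :
    ∃ y : X, ‖y‖ = 1 ∧ ∀ u ∈ K, 2 * ‖u‖ - ε < ‖u + ‖u‖ • y‖ := by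
  obtain ⟨t, htD, ht, hKt⟩ := hK.elim_finite_subcover_image (b := D)
    (c := fun d => Metric.ball d (ε / 8)) (fun _ _ => Metric.isOpen_ball)
    (by rw [(Metric.dense_iff_iUnion_ball D).1 hD _ (by positivity)]; exact Set.subset_univ K)
  obtain ⟨n, x, rfl⟩ := ht.fin_embedding
  obtain ⟨y, -, hy0, hy⟩ := h (ε / 2) (by positivity) n x fun i => htD ⟨i, rfl⟩
  have hy1 : ‖‖y‖⁻¹ • y‖ = 1 := norm_smul_inv_norm (𝕜 := ℝ) (norm_ne_zero_iff.mp hy0)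
  refine ⟨‖y‖⁻¹ • y, hy1, fun u hu => ?_⟩
  obtain ⟨_, ⟨i, rfl⟩, hui⟩ := Set.mem_iUnion₂.1 (hKt hu)
  have hxi := hy i
  rw [norm_smul_add_norm_smul] at hxi
  have := (lipschitzWith_norm_add_norm_smul_sub hy1.le).le_add_mul (x i) u
  rw [Metric.mem_ball, dist_comm] at hui
  push_cast at this
  linarith [lt_of_mul_lt_mul_left hxi (norm_nonneg y)]

end Octahedral

theorem stmt5_general (X : Type) [NormedAddCommGroup X] [NormedSpace ℝ X]
    (D : Set X) (hD : Dense D) :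
    IsOH X ↔
      ∀ ε > (0 : ℝ), ∀ (n : ℕ) (x : Fin n → X), (∀ i, x i ∈ D) →
        ∃ y ∈ D, ‖y‖ ≠ 0 ∧
          ∀ i, ‖y‖ * (2 * ‖x i‖ - ε) < ‖‖y‖ • x i + ‖x i‖ • y‖ := by
  refine ⟨fun hX ε hε n x _ => ?_, fun h E hE ε hε => ?_⟩
  · obtain ⟨y, hy, hxy⟩ := hX.exists_norm_eq_one_forall_lt x hε
    exact hD.exists_mem_open (isOpen_setOf_forall_lt_norm_smul_add x ε)
      ⟨y, by simp [hy], fun i => by simpa [hy] using hxy i⟩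
  · obtain ⟨y, hy, hK⟩ := exists_norm_eq_one_forall_lt_of_isCompact hD h
      ((isCompact_sphere (0 : E) 1).image continuous_subtype_val) hε
    refine ⟨y, hy, fun x hx => ?_⟩
    rcases eq_or_ne x 0 with rfl | hx0
    · simp [hy, hε.le]
    have hu : ‖‖x‖⁻¹ • x‖ = 1 := norm_smul_inv_norm (𝕜 := ℝ) hx0
    have hxy := hK (‖x‖⁻¹ • x) ⟨⟨_, E.smul_mem _ hx⟩, by simpa using hu, rfl⟩
    rw [hu, one_smul] at hxy
    simpa [hy, smul_inv_smul₀ (norm_ne_zero_iff.mpr hx0)] using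
      one_sub_mul_add_one_le_norm_smul_add hu hy (by linarith) (norm_nonneg x)

theorem stmt5 (X : Type) [NormedAddCommGroup X] [NormedSpace ℝ X] [CompleteSpace X]
    (D : Set X) (hD : Dense D) :
    IsOH X ↔
      ∀ ε > (0 : ℝ), ∀ (n : ℕ) (x : Fin n → X), (∀ i, x i ∈ D) →
        ∃ y ∈ D, ‖y‖ ≠ 0 ∧
          ∀ i, ‖y‖ * (2 * ‖x i‖ - ε) < ‖‖y‖ • x i + ‖x i‖ • y‖ :=
  stmt5_general X D hD
end

section
/- The set {μ ∈ 𝒫 : the closed unit ball of X_μ is dentable} is an Fσδ subset of 𝒫 (a countable intersection of countable unions of closed sets); equivalently, its complement {μ ∈ 𝒫 : B_{X_μ} is not dentable} is a countable union of Gδ subsets of 𝒫. -/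
open scoped BigOperators Topology

/-!
Let `X` represent `X_μ`, with `ι : V → X` dense and `μ = ‖ι ·‖`. Then `B_X` is dentable iff
`X ≠ 0` and, for every rational `r > 0`, some `ι v ∈ B_X` stays `δ`-far (`δ > 0`) from all rational
convex combinations of points `ι w` of the open ball with `‖ι w - ι v‖ > r`. If a slice of
diameter `< r` contains `ι v` with some margin, those points and their convex combinations lie
outside it. Conversely, `ι v` then avoids the closed convex hull of the points of `B_X` that are
`2r`-far from it, and Hahn–Banach yields a slice missing that hull, i.e. inside `B(ι v, 2r)`.
The condition involves countably many values of `μ`, each clause closed under pointwise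
convergence, so the set is `⋂ r, ⋃ δ v, (closed)`. A representative exists: extend `μ` to `c00`
as its infimal convolution with a weighted `ℓ¹`-norm, and complete.
-/

open Set Metric

section FsigmaDelta

variable {α : Type*} [TopologicalSpace α]

lemma isFsigma_iUnion {ι : Type*} [Countable ι] {c : ι → Set α} (hc : ∀ i, IsClosed (c i)) :
    IsFsigma (⋃ i, c i) := by
  cases isEmpty_or_nonempty ι
  · exact ⟨fun _ => ∅, fun _ => isClosed_empty, by simp⟩
  · obtain ⟨e, he⟩ := exists_surjective_nat ι
    exact ⟨fun n => c (e n), fun n => hc (e n), (he.iUnion_comp c).symm⟩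

lemma IsFsigma.inter {s t : Set α} (hs : IsFsigma s) (ht : IsFsigma t) : IsFsigma (s ∩ t) := by
  obtain ⟨c, hc, rfl⟩ := hs
  obtain ⟨d, hd, rfl⟩ := ht
  have : (⋃ n, c n) ∩ ⋃ m, d m = ⋃ p : ℕ × ℕ, c p.1 ∩ d p.2 := by
    ext; simp only [mem_inter_iff, mem_iUnion, Prod.exists]; tauto
  rw [this]
  exact isFsigma_iUnion fun p => (hc p.1).inter (hd p.2)

lemma isFsigmaDelta_iInter {ι : Type*} [Countable ι] {s : ι → Set α}
    (hs : ∀ i, IsFsigma (s i)) : IsFsigmaDelta (⋂ i, s i) := by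
  cases isEmpty_or_nonempty ι
  · exact ⟨fun _ _ => univ, fun _ _ => isClosed_univ, by simp [iUnion_const]⟩
  · obtain ⟨e, he⟩ := exists_surjective_nat ι
    choose c hc hsc using hs
    refine ⟨fun n => c (e n), fun n => hc (e n), ?_⟩
    rw [← he.iInter_comp s]
    exact iInter_congr fun n => hsc (e n)

end FsigmaDelta

section RatConvexHull

variable {X : Type*} [NormedAddCommGroup X] [NormedSpace ℝ X]

/-- `clCoQ A` is, by definition, the closure of this set. -/
def ratConvexHull (A : Set X) : Set X :=
  {z : X | ∃ (n : ℕ) (q : Fin n → ℚ) (y : Fin n → X),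
    (∀ i, 0 < q i) ∧ (∑ i, q i = 1) ∧ (∀ i, y i ∈ A) ∧ z = ∑ i, (q i : ℝ) • y i}

lemma subset_ratConvexHull (A : Set X) : A ⊆ ratConvexHull A :=
  fun a ha => ⟨1, fun _ => 1, fun _ => a, fun _ => one_pos, by simp, fun _ => ha, by simp⟩

lemma ratConvexHull_combo {A : Set X} {a b : X} {p : ℚ} (hp0 : 0 < p) (hp1 : p < 1)
    (ha : a ∈ ratConvexHull A) (hb : b ∈ ratConvexHull A) :
    (p : ℝ) • a + (1 - (p : ℝ)) • b ∈ ratConvexHull A := by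
  obtain ⟨n, q, y, hq0, hq1, hyA, rfl⟩ := ha
  obtain ⟨m, s, z, hs0, hs1, hzA, rfl⟩ := hb
  refine ⟨n + m, Fin.append (fun i => p * q i) (fun j => (1 - p) * s j), Fin.append y z,
    ?_, ?_, ?_, ?_⟩
  · refine Fin.addCases (fun i => ?_) (fun j => ?_)
    · simpa using mul_pos hp0 (hq0 i)
    · simpa using mul_pos (sub_pos.2 hp1) (hs0 j)
  · rw [Fin.sum_univ_add]
    simp only [Fin.append_left, Fin.append_right]
    rw [← Finset.mul_sum, ← Finset.mul_sum, hq1, hs1]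
    ring
  · exact Fin.addCases (fun i => by simpa using hyA i) (fun j => by simpa using hzA j)
  · simp only [Fin.sum_univ_add, Fin.append_left, Fin.append_right, Finset.smul_sum, smul_smul]
    push_cast
    rfl

lemma convex_clCoQ (A : Set X) : Convex ℝ (clCoQ A) := by
  intro a ha b hb s t hs ht hst
  obtain rfl : t = 1 - s := by linarith
  have hs' : s ∈ closure (Ioo (0 : ℝ) 1 ∩ range ((↑) : ℚ → ℝ)) := by
    have h := closure_mono
      (Rat.denseRange_cast.open_subset_closure_inter (isOpen_Ioo (a := (0 : ℝ)) (b := 1)))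
    rw [closure_closure, closure_Ioo zero_ne_one] at h
    exact h ⟨hs, by linarith⟩
  have hab : (a, b) ∈ closure (ratConvexHull A ×ˢ ratConvexHull A) := by
    rw [closure_prod_eq]; exact ⟨ha, hb⟩
  refine map_mem_closure₂ (f := fun (s : ℝ) (p : X × X) => s • p.1 + (1 - s) • p.2)
    (by fun_prop) hs' hab ?_
  rintro _ ⟨⟨hp0, hp1⟩, p, rfl⟩ ⟨y, z⟩ ⟨hy, hz⟩
  exact ratConvexHull_combo (by exact_mod_cast hp0) (by exact_mod_cast hp1) hy hz

end RatConvexHull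

section Slices

variable {X : Type*} [NormedAddCommGroup X] [NormedSpace ℝ X]

lemma IsSlice.subset_closedBall {S : Set X} (hS : IsSlice S) : S ⊆ closedBall 0 1 := by
  obtain ⟨f, α, -, -, rfl⟩ := hS
  exact fun x hx => mem_closedBall_zero_iff.2 hx.1

lemma exists_norm_le_one_lt_apply {f : X →L[ℝ] ℝ} (hf : ‖f‖ = 1) {α : ℝ} (hα : 0 < α) :
    ∃ y : X, ‖y‖ ≤ 1 ∧ 1 - α < f y := by
  obtain ⟨y, hy, hfy⟩ := f.exists_lt_apply_of_lt_opNorm (r := 1 - α) (by linarith)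
  rw [Real.norm_eq_abs] at hfy
  rcases le_or_gt 0 (f y) with h | h
  · exact ⟨y, hy.le, by rwa [abs_of_nonneg h] at hfy⟩
  · exact ⟨-y, by rw [norm_neg]; exact hy.le, by rwa [map_neg, ← abs_of_neg h]⟩

lemma exists_isSlice_subset_compl [Nontrivial X] {K : Set X} (hKc : Convex ℝ K)
    (hK : IsClosed K) {x : X} (hx : ‖x‖ ≤ 1) (hxK : x ∉ K) : ∃ S, IsSlice S ∧ S ⊆ Kᶜ := by
  rcases K.eq_empty_or_nonempty with rfl | ⟨a, ha⟩
  · obtain ⟨g, hg, -⟩ := exists_dual_vector' ℝ x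
    exact ⟨_, ⟨g, 1, hg, one_pos, rfl⟩, by simp⟩
  obtain ⟨f, u, hfK, hfx⟩ := geometric_hahn_banach_closed_point hKc hK hxK
  have hf : 0 < ‖f‖ := norm_pos_iff.2 fun h => by
    have := hfK a ha
    simp only [h, zero_apply] at this hfx
    linarith
  have hu : u < ‖f‖ := hfx.trans_le ((Real.le_norm_self _).trans
    ((f.le_opNorm x).trans (mul_le_of_le_one_right hf.le hx)))
  refine ⟨_, ⟨‖f‖⁻¹ • f, 1 - u / ‖f‖, ?_, sub_pos.2 ((div_lt_one hf).2 hu), rfl⟩, ?_⟩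
  · rw [norm_smul, norm_inv, norm_norm, inv_mul_cancel₀ hf.ne']
  · rintro y ⟨-, hy⟩ hyK
    have : u < f y := by
      rw [sub_sub_cancel, smul_apply, smul_eq_mul, div_lt_iff₀' hf,
        ← mul_assoc, mul_inv_cancel₀ hf.ne', one_mul] at hy
      exact hy
    exact (hfK y hyK).not_gt this

end Slices

/-- Read in `X_μ` through `μ = ‖ι ·‖`: `ι v` is `δ`-far from the rational convex hull of the points
of the open unit ball that are `r`-far from it. This is the countable stand-in for "some slice has
diameter `< r`" (see `ballDentable_iff_of_repOf`). -/
def DentWitness (μ : (ℕ →₀ ℚ) → ℝ) (r δ : ℚ) (v : ℕ →₀ ℚ) : Prop :=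
  μ v ≤ 1 ∧ ∀ (n : ℕ) (q : Fin n → ℚ) (w : Fin n → ℕ →₀ ℚ), (∀ i, 0 < q i) → ∑ i, q i = 1 →
    (∀ i, μ (w i) < 1) → (∀ i, (r : ℝ) < μ (w i - v)) → (δ : ℝ) ≤ μ (v - ∑ i, q i • w i)

section Representative

variable {X : Type*} [NormedAddCommGroup X] [NormedSpace ℝ X] {μ : (ℕ →₀ ℚ) → ℝ}

lemma DenseRange.exists_norm_lt_one_near {α : Type*} {ι : α → X} (hι : DenseRange ι) {y : X}
    (hy : ‖y‖ ≤ 1) {η : ℝ} (hη : 0 < η) : ∃ a, ‖ι a‖ < 1 ∧ ‖ι a - y‖ < η := by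
  have hy' : y ∈ closure (ball 0 1 ∩ range ι) := by
    have h := closure_mono (hι.open_subset_closure_inter (isOpen_ball (x := (0 : X)) (ε := 1)))
    rw [closure_closure, closure_ball _ one_ne_zero] at h
    exact h (mem_closedBall_zero_iff.2 hy)
  obtain ⟨_, ⟨hb, a, rfl⟩, hd⟩ := Metric.mem_closure_iff.1 hy' η hη
  exact ⟨a, mem_ball_zero_iff.1 hb, by rwa [dist_comm, dist_eq_norm] at hd⟩

lemma dentWitness_iff {ι : (ℕ →₀ ℚ) → X} (hadd : ∀ u v, ι (u + v) = ι u + ι v)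
    (hsmul : ∀ (q : ℚ) v, ι (q • v) = (q : ℝ) • ι v) (hnorm : ∀ v, ‖ι v‖ = μ v)
    {r δ : ℚ} {v : ℕ →₀ ℚ} :
    DentWitness μ r δ v ↔ ‖ι v‖ ≤ 1 ∧ ∀ (n : ℕ) (q : Fin n → ℚ) (w : Fin n → ℕ →₀ ℚ),
      (∀ i, 0 < q i) → ∑ i, q i = 1 → (∀ i, ‖ι (w i)‖ < 1) →
      (∀ i, (r : ℝ) < ‖ι (w i) - ι v‖) → (δ : ℝ) ≤ ‖ι v - ∑ i, (q i : ℝ) • ι (w i)‖ := by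
  let φ := AddMonoidHom.mk' ι hadd
  have hsub : ∀ u w, ι (u - w) = ι u - ι w := map_sub φ
  have hsum : ∀ (n : ℕ) (q : Fin n → ℚ) (w : Fin n → ℕ →₀ ℚ),
      ι (∑ i, q i • w i) = ∑ i, (q i : ℝ) • ι (w i) := fun n q w => by
    simpa only [φ, AddMonoidHom.mk'_apply, hsmul] using map_sum φ (fun i => q i • w i) Finset.univ
  simp only [DentWitness, ← hnorm, hsub, hsum]

lemma exists_pos_of_ballDentable (hX : RepOf μ X) (hD : BallDentable X) : ∃ v, 0 < μ v := by
  obtain ⟨ι, -, -, hnorm, hdense⟩ := hX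
  obtain ⟨-, ⟨f, α, hf, -, -⟩, -⟩ := hD 1 one_pos
  by_contra! h
  have hzero : ∀ x : X, x = 0 := fun x =>
    hdense.induction_on (p := fun x => x = 0) x isClosed_singleton
      fun v => norm_le_zero_iff.1 ((hnorm v).trans_le (h v))
  have : f = 0 := by ext x; simp [hzero x]
  simp [this] at hf

lemma exists_dentWitness_of_ballDentable (hX : RepOf μ X) (hD : BallDentable X) {r : ℚ}
    (hr : 0 < r) : ∃ δ : ℚ, 0 < δ ∧ ∃ v, DentWitness μ r δ v := by
  obtain ⟨ι, hadd, hsmul, hnorm, hdense⟩ := hX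
  obtain ⟨S, ⟨f, α, hf, hα, rfl⟩, hdiam⟩ := hD r (by exact_mod_cast hr)
  have hfle : ∀ z, f z ≤ ‖z‖ := fun z =>
    (Real.le_norm_self _).trans ((f.le_opNorm z).trans_eq (by rw [hf, one_mul]))
  obtain ⟨y, hy, hfy⟩ := exists_norm_le_one_lt_apply hf hα
  have hγ : 0 < (f y - (1 - α)) / 2 := half_pos (sub_pos.2 hfy)
  obtain ⟨v, hv, hvy⟩ := hdense.exists_norm_lt_one_near hy hγ
  have hfv : 1 - α + (f y - (1 - α)) / 2 < f (ι v) := by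
    have := hfle (y - ι v)
    rw [map_sub, norm_sub_rev] at this
    linarith
  obtain ⟨δ, hδ0, hδ⟩ := exists_rat_btwn hγ
  refine ⟨δ, by exact_mod_cast hδ0, v, (dentWitness_iff hadd hsmul hnorm).2 ⟨hv.le, ?_⟩⟩
  intro n q w hq hq1 hw hwv
  have hbdd : Bornology.IsBounded {x : X | ‖x‖ ≤ 1 ∧ 1 - α < f x} :=
    isBounded_closedBall.subset fun x hx => mem_closedBall_zero_iff.2 hx.1
  -- points `r`-far from `ι v` leave the slice, whose diameter is less than `r`
  have hfw : ∀ i, f (ι (w i)) ≤ 1 - α := fun i => by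
    by_contra! h
    have := dist_le_diam_of_mem hbdd ⟨(hw i).le, h⟩ ⟨hv.le, by linarith⟩
    rw [dist_eq_norm] at this
    linarith [hwv i]
  have hfsum : f (∑ i, (q i : ℝ) • ι (w i)) ≤ 1 - α :=
    (convex_halfSpace_le f.toLinearMap.isLinear (1 - α)).sum_mem
      (fun i _ => by exact_mod_cast (hq i).le) (by exact_mod_cast hq1) (fun i _ => hfw i)
  have := hfle (ι v - ∑ i, (q i : ℝ) • ι (w i))
  rw [map_sub] at this
  linarith

lemma ballDentable_of_dentWitness (hX : RepOf μ X) (h0 : ∃ v, 0 < μ v)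
    (hW : ∀ r : ℚ, 0 < r → ∃ δ : ℚ, 0 < δ ∧ ∃ v, DentWitness μ r δ v) : BallDentable X := by
  obtain ⟨ι, hadd, hsmul, hnorm, hdense⟩ := hX
  have : Nontrivial X := by
    obtain ⟨v, hv⟩ := h0
    exact ⟨ι v, 0, norm_pos_iff.1 (by rwa [hnorm])⟩
  intro ε hε
  obtain ⟨r, hr0, hrε⟩ := exists_rat_btwn (div_pos hε four_pos)
  obtain ⟨δ, hδ, v, hvW⟩ := hW r (by exact_mod_cast hr0)
  obtain ⟨hv, hvfar⟩ := (dentWitness_iff hadd hsmul hnorm).1 hvW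
  set A := {y : X | ‖y‖ ≤ 1 ∧ 2 * (r : ℝ) < ‖y - ι v‖}
  have hfar : ∀ z ∈ ratConvexHull A, (δ : ℝ) ≤ ‖ι v - z‖ := by
    rintro _ ⟨n, q, y, hq, hq1, hyA, rfl⟩
    refine le_of_forall_pos_le_add fun θ hθ => ?_
    choose w hw hwy using fun i => hdense.exists_norm_lt_one_near (hyA i).1 (lt_min hθ hr0)
    have hwv : ∀ i, (r : ℝ) < ‖ι (w i) - ι v‖ := fun i => by
      have := norm_sub_le_norm_sub_add_norm_sub (y i) (ι (w i)) (ι v)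
      rw [norm_sub_rev (y i) (ι (w i))] at this
      linarith [(hyA i).2, min_le_right θ (r : ℝ), hwy i]
    have hclose : ‖∑ i, (q i : ℝ) • y i - ∑ i, (q i : ℝ) • ι (w i)‖ ≤ θ := by
      rw [← Finset.sum_sub_distrib]
      simp_rw [← smul_sub]
      refine mem_closedBall_zero_iff.1 ((convex_closedBall (0 : X) θ).sum_mem
        (fun i _ => by exact_mod_cast (hq i).le) (by exact_mod_cast hq1) fun i _ => ?_)
      rw [mem_closedBall_zero_iff, norm_sub_rev]
      exact (hwy i).le.trans (min_le_left _ _)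
    calc (δ : ℝ) ≤ ‖ι v - ∑ i, (q i : ℝ) • ι (w i)‖ := hvfar n q w hq hq1 hw hwv
      _ ≤ ‖ι v - ∑ i, (q i : ℝ) • y i‖ + ‖∑ i, (q i : ℝ) • y i - ∑ i, (q i : ℝ) • ι (w i)‖ :=
        norm_sub_le_norm_sub_add_norm_sub _ _ _
      _ ≤ _ := by linarith
  have hvK : ι v ∉ clCoQ A := fun h => by
    obtain ⟨z, hz, hdz⟩ := Metric.mem_closure_iff.1 h δ (by exact_mod_cast hδ)
    rw [dist_eq_norm] at hdz
    exact (hfar z hz).not_gt hdz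
  obtain ⟨S, hS, hSK⟩ := exists_isSlice_subset_compl (convex_clCoQ A) isClosed_closure hv hvK
  have hSball : S ⊆ closedBall (ι v) (2 * r) := fun y hy => by
    by_contra h
    rw [mem_closedBall, dist_eq_norm, not_le] at h
    exact hSK hy (subset_closure (subset_ratConvexHull A
      ⟨mem_closedBall_zero_iff.1 (hS.subset_closedBall hy), h⟩))
  refine ⟨S, hS, ?_⟩
  calc diam S ≤ diam (closedBall (ι v) (2 * r)) := diam_mono hSball isBounded_closedBall
    _ ≤ 2 * (2 * r) := diam_closedBall (by positivity)
    _ < ε := by linarith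

lemma ballDentable_iff_of_repOf (hX : RepOf μ X) :
    BallDentable X ↔
      (∃ v, 0 < μ v) ∧ ∀ r : ℚ, 0 < r → ∃ δ : ℚ, 0 < δ ∧ ∃ v, DentWitness μ r δ v :=
  ⟨fun hD => ⟨exists_pos_of_ballDentable hX hD,
      fun _ hr => exists_dentWitness_of_ballDentable hX hD hr⟩,
    fun h => ballDentable_of_dentWitness hX h.1 h.2⟩

end Representative

section Extension

variable {μ : (ℕ →₀ ℚ) → ℝ}

lemma IsSeminormV.map_zero (hμ : IsSeminormV μ) : μ 0 = 0 := by
  simpa using hμ.1 0 0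

lemma IsSeminormV.nonneg (hμ : IsSeminormV μ) (v : ℕ →₀ ℚ) : 0 ≤ μ v := by
  have h := hμ.2 v (-v)
  have hneg : μ (-v) = μ v := by simpa using hμ.1 (-1) v
  rw [add_neg_cancel, hμ.map_zero, hneg] at h
  linarith

lemma IsSeminormV.le_sum_abs_mul (hμ : IsSeminormV μ) (u : ℕ →₀ ℚ) :
    μ u ≤ ∑ i ∈ u.support, |(u i : ℝ)| * μ (Finsupp.single i 1) := by
  calc μ u = μ (∑ i ∈ u.support, u i • Finsupp.single i 1) := by
        simp_rw [Finsupp.smul_single_one]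
        exact congrArg μ u.sum_single.symm
    _ ≤ ∑ i ∈ u.support, μ (u i • Finsupp.single i 1) :=
        Finset.le_sum_of_subadditive μ hμ.map_zero.le hμ.2 _ _
    _ = _ := by simp_rw [hμ.1]

lemma toC00_apply (v : ℕ →₀ ℚ) (i : ℕ) : toC00 v i = v i := rfl

lemma toC00_sub (u v : ℕ →₀ ℚ) : toC00 (u - v) = toC00 u - toC00 v := by
  ext i; simp [toC00_apply]

lemma toC00_add (u v : ℕ →₀ ℚ) : toC00 (u + v) = toC00 u + toC00 v := by
  ext i; simp [toC00_apply]

lemma toC00_smul (q : ℚ) (v : ℕ →₀ ℚ) : toC00 (q • v) = (q : ℝ) • toC00 v := by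
  ext i; simp [toC00_apply]

noncomputable def weightedNorm (μ : (ℕ →₀ ℚ) → ℝ) (x : ℕ →₀ ℝ) : ℝ :=
  x.sum fun i t => |t| * μ (Finsupp.single i 1)

lemma weightedNorm_eq_sum {x : ℕ →₀ ℝ} {S : Finset ℕ} (hS : x.support ⊆ S) :
    weightedNorm μ x = ∑ i ∈ S, |x i| * μ (Finsupp.single i 1) :=
  Finsupp.sum_of_support_subset x hS _ fun _ _ => by simp

lemma weightedNorm_nonneg (hμ : IsSeminormV μ) (x : ℕ →₀ ℝ) : 0 ≤ weightedNorm μ x :=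
  Finset.sum_nonneg fun _ _ => mul_nonneg (abs_nonneg _) (hμ.nonneg _)

lemma weightedNorm_zero : weightedNorm μ 0 = 0 := by simp [weightedNorm]

lemma weightedNorm_add_le (hμ : IsSeminormV μ) (x y : ℕ →₀ ℝ) :
    weightedNorm μ (x + y) ≤ weightedNorm μ x + weightedNorm μ y := by
  classical
  rw [weightedNorm_eq_sum Finsupp.support_add, weightedNorm_eq_sum Finset.subset_union_left,
    weightedNorm_eq_sum Finset.subset_union_right, ← Finset.sum_add_distrib]
  refine Finset.sum_le_sum fun i _ => ?_
  rw [← add_mul, Finsupp.add_apply]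
  exact mul_le_mul_of_nonneg_right (abs_add_le _ _) (hμ.nonneg _)

lemma weightedNorm_smul (c : ℝ) (x : ℕ →₀ ℝ) :
    weightedNorm μ (c • x) = |c| * weightedNorm μ x := by
  rw [weightedNorm_eq_sum Finsupp.support_smul, weightedNorm_eq_sum subset_rfl, Finset.mul_sum]
  simp_rw [Finsupp.smul_apply, smul_eq_mul, abs_mul, mul_assoc]

lemma IsSeminormV.le_weightedNorm (hμ : IsSeminormV μ) (u : ℕ →₀ ℚ) :
    μ u ≤ weightedNorm μ (toC00 u) := by
  rw [weightedNorm_eq_sum (x := toC00 u) Finsupp.support_mapRange]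
  exact hμ.le_sum_abs_mul u

/-- The extension of `μ` to `c00`: the infimal convolution of `μ` with the weighted `ℓ¹`-norm.
It agrees with `μ` on `V` because `μ` is dominated by that norm. -/
noncomputable def extension (μ : (ℕ →₀ ℚ) → ℝ) (x : ℕ →₀ ℝ) : ℝ :=
  ⨅ v : ℕ →₀ ℚ, μ v + weightedNorm μ (x - toC00 v)

section

variable (hμ : IsSeminormV μ)
include hμ

lemma extension_le (x : ℕ →₀ ℝ) (v : ℕ →₀ ℚ) :
    extension μ x ≤ μ v + weightedNorm μ (x - toC00 v) :=
  ciInf_le ⟨0, by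
    rintro _ ⟨u, rfl⟩
    exact add_nonneg (hμ.nonneg u) (weightedNorm_nonneg hμ _)⟩ v

lemma extension_nonneg (x : ℕ →₀ ℝ) : 0 ≤ extension μ x :=
  le_ciInf fun v => add_nonneg (hμ.nonneg v) (weightedNorm_nonneg hμ _)

lemma extension_le_weightedNorm (x : ℕ →₀ ℝ) : extension μ x ≤ weightedNorm μ x := by
  simpa [toC00, hμ.map_zero] using extension_le hμ x 0

lemma extension_zero : extension μ 0 = 0 :=
  le_antisymm ((extension_le_weightedNorm hμ 0).trans_eq weightedNorm_zero)
    (extension_nonneg hμ 0)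

lemma extension_toC00 (v : ℕ →₀ ℚ) : extension μ (toC00 v) = μ v := by
  refine le_antisymm (by simpa [weightedNorm_zero] using extension_le hμ (toC00 v) v)
    (le_ciInf fun w => ?_)
  calc μ v ≤ μ w + μ (v - w) := by simpa using hμ.2 w (v - w)
    _ ≤ μ w + weightedNorm μ (toC00 v - toC00 w) := by
        rw [← toC00_sub]; gcongr; exact hμ.le_weightedNorm _

lemma extension_add_le (x y : ℕ →₀ ℝ) :
    extension μ (x + y) ≤ extension μ x + extension μ y := by
  rw [← sub_le_iff_le_add]
  refine le_ciInf fun v => ?_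
  rw [sub_le_comm]
  refine le_ciInf fun w => ?_
  rw [sub_le_iff_le_add]
  calc extension μ (x + y)
      ≤ μ (v + w) + weightedNorm μ ((x - toC00 v) + (y - toC00 w)) := by
        convert extension_le hμ (x + y) (v + w) using 3
        rw [toC00_add]; abel
    _ ≤ _ := by linarith [hμ.2 v w, weightedNorm_add_le hμ (x - toC00 v) (y - toC00 w)]

lemma extension_smul_le (c : ℝ) (x : ℕ →₀ ℝ) :
    extension μ (c • x) ≤ |c| * extension μ x := by
  -- `μ` is only `ℚ`-homogeneous: bound with a rational `q`, then let `q → c`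
  have hq : ∀ q : ℚ,
      extension μ (c • x) ≤ |(q : ℝ)| * extension μ x + |c - q| * weightedNorm μ x := by
    intro q
    rw [← sub_le_iff_le_add, extension.eq_1 μ x, Real.mul_iInf_of_nonneg (abs_nonneg _)]
    refine le_ciInf fun v => ?_
    rw [sub_le_iff_le_add]
    calc extension μ (c • x)
        ≤ μ (q • v) + weightedNorm μ ((q : ℝ) • (x - toC00 v) + (c - q) • x) := by
          convert extension_le hμ (c • x) (q • v) using 3
          rw [toC00_smul]; module
      _ ≤ _ := by
          rw [hμ.1, mul_add]
          linarith [weightedNorm_add_le hμ ((q : ℝ) • (x - toC00 v)) ((c - q) • x),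
            weightedNorm_smul (μ := μ) (q : ℝ) (x - toC00 v), weightedNorm_smul (μ := μ) (c - q) x]
  have := Rat.denseRange_cast.induction_on (p := fun t : ℝ =>
      extension μ (c • x) ≤ |t| * extension μ x + |c - t| * weightedNorm μ x) c
    (isClosed_le continuous_const (by fun_prop)) hq
  simpa using this

end

end Extension

lemma exists_rat_approx (x : ℕ →₀ ℝ) (N : ℕ) :
    ∃ v : ℕ →₀ ℚ, v.support ⊆ x.support ∧ ∀ i, |x i - v i| ≤ 1 / (N + 1) := by
  have hN : (0 : ℝ) < N + 1 := by positivity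
  refine ⟨x.mapRange (fun t : ℝ => ((round (t * (N + 1)) : ℤ) : ℚ) / ((N : ℚ) + 1)) (by simp),
    Finsupp.support_mapRange, fun i => ?_⟩
  rw [Finsupp.mapRange_apply]
  push_cast
  rw [show x i - (round (x i * (N + 1)) : ℝ) / (N + 1)
      = (x i * (N + 1) - round (x i * (N + 1))) / (N + 1) by field_simp,
    abs_div, abs_of_pos hN]
  gcongr
  linarith [abs_sub_round (x i * (N + 1))]

/-- A copy of `c00` carrying the seminorm `extension μ`. -/
def C00With (_μ : PSp) : Type := ℕ →₀ ℝ

namespace C00With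

variable (μ : PSp)

noncomputable instance : AddCommGroup (C00With μ) := inferInstanceAs (AddCommGroup (ℕ →₀ ℝ))

noncomputable instance : Module ℝ (C00With μ) := inferInstanceAs (Module ℝ (ℕ →₀ ℝ))

noncomputable def seminorm : Seminorm ℝ (C00With μ) :=
  Seminorm.ofSMulLE (extension μ.1) (extension_zero μ.2) (extension_add_le μ.2)
    fun c x => by rw [Real.norm_eq_abs]; exact extension_smul_le μ.2 c x

noncomputable instance : SeminormedAddCommGroup (C00With μ) :=
  (seminorm μ).toAddGroupSeminorm.toSeminormedAddCommGroup

noncomputable instance : NormedSpace ℝ (C00With μ) :=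
  ⟨fun c x => (map_smul_eq_mul (seminorm μ) c x).le⟩

noncomputable def ofRat (v : ℕ →₀ ℚ) : C00With μ := toC00 v

lemma norm_ofRat (v : ℕ →₀ ℚ) : ‖ofRat μ v‖ = μ.1 v := extension_toC00 μ.2 v

lemma ofRat_add (u v : ℕ →₀ ℚ) : ofRat μ (u + v) = ofRat μ u + ofRat μ v := toC00_add u v

lemma ofRat_smul (q : ℚ) (v : ℕ →₀ ℚ) : ofRat μ (q • v) = (q : ℝ) • ofRat μ v :=
  toC00_smul q v

lemma denseRange_ofRat : DenseRange (ofRat μ) := by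
  refine Metric.denseRange_iff.2 fun (x : ℕ →₀ ℝ) r hr => ?_
  set C := ∑ i ∈ x.support, μ.1 (Finsupp.single i 1)
  obtain ⟨N, hN⟩ := exists_nat_gt (C / r)
  obtain ⟨v, hvx, hv⟩ := exists_rat_approx x N
  have hN1 : (0 : ℝ) < N + 1 := by positivity
  refine ⟨v, ?_⟩
  have hsupp : (x - toC00 v).support ⊆ x.support :=
    Finsupp.support_sub.trans (Finset.union_subset subset_rfl (Finsupp.support_mapRange.trans hvx))
  calc dist (α := C00With μ) x (ofRat μ v) = extension μ.1 (x - toC00 v) := dist_eq_norm _ _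
    _ ≤ weightedNorm μ.1 (x - toC00 v) := extension_le_weightedNorm μ.2 _
    _ ≤ ∑ i ∈ x.support, 1 / (N + 1) * μ.1 (Finsupp.single i 1) := by
        rw [weightedNorm_eq_sum hsupp]
        exact Finset.sum_le_sum fun i _ => mul_le_mul_of_nonneg_right (hv i) (μ.2.nonneg _)
    _ = C / (N + 1) := by rw [← Finset.mul_sum]; ring
    _ < r := by
        rw [div_lt_iff₀ hN1]
        rw [div_lt_iff₀ hr] at hN
        nlinarith

end C00With

lemma exists_repOf (μ : PSp) : ∃ X : BanachSp, RepOf μ.1 X.carrier := by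
  refine ⟨⟨UniformSpace.Completion (C00With μ)⟩,
    fun v => (C00With.ofRat μ v : UniformSpace.Completion (C00With μ)), fun u v => ?_,
    fun q v => ?_, fun v => ?_, ?_⟩
  · simp only [C00With.ofRat_add, UniformSpace.Completion.coe_add]
  · simp only [C00With.ofRat_smul, UniformSpace.Completion.coe_smul]
  · rw [UniformSpace.Completion.norm_coe, C00With.norm_ofRat]
  · exact UniformSpace.Completion.denseRange_coe.comp (C00With.denseRange_ofRat μ)
      (UniformSpace.Completion.continuous_coe _)

lemma mem_XmuP_ballDentable_iff (μ : PSp) :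
    μ ∈ XmuP (fun X => BallDentable X.carrier) ↔
      (∃ v, 0 < μ.1 v) ∧ ∀ r : ℚ, 0 < r → ∃ δ : ℚ, 0 < δ ∧ ∃ v, DentWitness μ.1 r δ v := by
  obtain ⟨X, hX⟩ := exists_repOf μ
  exact ⟨fun h => (ballDentable_iff_of_repOf hX).1 (h X hX),
    fun h Y hY => (ballDentable_iff_of_repOf hY).2 h⟩

lemma isClosed_setOf_dentWitness (r δ : ℚ) (v : ℕ →₀ ℚ) :
    IsClosed {μ : (ℕ →₀ ℚ) → ℝ | DentWitness μ r δ v} := by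
  have hev : ∀ u, Continuous fun μ : (ℕ →₀ ℚ) → ℝ => μ u := continuous_apply
  simp only [DentWitness, ofPred_and, ofPred_forall]
  refine (isClosed_le (hev v) continuous_const).inter
    (isClosed_iInter fun n => isClosed_iInter fun q => isClosed_iInter fun w => ?_)
  refine isClosed_iInter fun _ => isClosed_iInter fun _ => isClosed_imp ?_ <|
    isClosed_imp ?_ <| isClosed_le continuous_const (hev _)
  · simp only [ofPred_forall]
    exact isOpen_iInter_of_finite fun i => isOpen_lt (hev _) continuous_const
  · simp only [ofPred_forall]
    exact isOpen_iInter_of_finite fun i => isOpen_lt continuous_const (hev _)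

lemma isFsigma_setOf_exists_pos : IsFsigma {μ : PSp | ∃ v, 0 < μ.1 v} := by
  have : {μ : PSp | ∃ v, 0 < μ.1 v} =
      ⋃ p : (ℕ →₀ ℚ) × {s : ℚ // 0 < s}, {μ : PSp | (p.2 : ℝ) ≤ μ.1 p.1} := by
    ext μ
    simp only [mem_ofPred_eq, mem_iUnion, Prod.exists, Subtype.exists, exists_prop]
    constructor
    · rintro ⟨v, hv⟩
      obtain ⟨s, hs0, hs⟩ := exists_rat_btwn hv
      exact ⟨v, s, by exact_mod_cast hs0, hs.le⟩
    · rintro ⟨v, s, hs, hv⟩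
      exact ⟨v, lt_of_lt_of_le (by exact_mod_cast hs) hv⟩
  rw [this]
  exact isFsigma_iUnion fun p =>
    isClosed_le continuous_const ((continuous_apply p.1).comp continuous_subtype_val)

lemma isFsigma_setOf_exists_dentWitness (r : ℚ) :
    IsFsigma {μ : PSp | ∃ δ : ℚ, 0 < δ ∧ ∃ v, DentWitness μ.1 r δ v} := by
  have : {μ : PSp | ∃ δ : ℚ, 0 < δ ∧ ∃ v, DentWitness μ.1 r δ v} =
      ⋃ p : {δ : ℚ // 0 < δ} × (ℕ →₀ ℚ), {μ : PSp | DentWitness μ.1 r p.1 p.2} := by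
    ext μ
    simp only [mem_ofPred_eq, mem_iUnion, Prod.exists, Subtype.exists, exists_prop]
  rw [this]
  exact isFsigma_iUnion fun p =>
    (isClosed_setOf_dentWitness r p.1 p.2).preimage continuous_subtype_val

theorem stmt17 : IsFsigmaDelta (XmuP (fun X => BallDentable X.carrier)) := by
  have h : XmuP (fun X => BallDentable X.carrier) = ⋂ r : {r : ℚ // 0 < r},
      {μ : PSp | ∃ v, 0 < μ.1 v} ∩ {μ : PSp | ∃ δ : ℚ, 0 < δ ∧ ∃ v, DentWitness μ.1 r δ v} := by
    ext μ
    simp only [mem_iInter, mem_inter_iff, mem_ofPred_eq, Subtype.forall, mem_XmuP_ballDentable_iff]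
    exact ⟨fun h r hr => ⟨h.1, h.2 r hr⟩, fun h => ⟨(h 1 one_pos).1, fun r hr => (h r hr).2⟩⟩
  rw [h]
  exact isFsigmaDelta_iInter fun r =>
    isFsigma_setOf_exists_pos.inter (isFsigma_setOf_exists_dentWitness r)
end
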